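/- arXiv:1712.08137 — 2 statements merged into one kernel-verified Lean document; each statement's English description precedes it below -/
import Mathlib

section
/- Take boundary value b = 0 in the truncated backward European put recursion. Then V_E^0(0,0,0) = V^{TT}, the discounted truncated forward expectation of the put payoff. -/
open Finset

open scoped Classical

noncomputable section

namespace HScut

/-- Level of a jump path `s : Fin n → ℤ` at time `t` (sum of the first `t` jumps). -/
def levelAt (n : ℕ) (s : Fin n → ℤ) (t : ℕ) : ℤ :=
  ∑ i ∈ Finset.univ.filter (fun i : Fin n => (i : ℕ) < t), s i

/-- Jump paths of length `n` with jumps of amplitude at most `m`. -/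
def paths (n m : ℕ) : Finset (Fin n → ℤ) :=
  Fintype.piFinset fun _ => Finset.Icc (-(m : ℤ)) (m : ℤ)

/-- Weight `π(s) = ∏ q (s i)` of a jump path. -/
def pathWeight (n : ℕ) (q : ℤ → ℝ) (s : Fin n → ℤ) : ℝ :=
  ∏ i, q (s i)

/-- Modified weight `π̃(s)`, where each `q (±i)` (`i ≠ 0`) is replaced by `max (q i) (q (-i))`
(which equals `w_i / n`). -/
def modWeight (n : ℕ) (q : ℤ → ℝ) (s : Fin n → ℤ) : ℝ :=
  ∏ i, (if s i = 0 then q 0 else max (q (s i)) (q (-s i)))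

/-- `q^{(n)}(k)`: probability of a net balance of `k` cumulative jumps at maturity. -/
def qfull (n m : ℕ) (q : ℤ → ℝ) (k : ℤ) : ℝ :=
  ∑ s ∈ (paths n m).filter (fun s => levelAt n s n = k), pathWeight n q s

/-- `q̃^{(n)}(k)`: enlarged probability of a net balance of `k` cumulative jumps at maturity. -/
def qtilde (n m : ℕ) (q : ℤ → ℝ) (k : ℤ) : ℝ :=
  ∑ s ∈ (paths n m).filter (fun s => levelAt n s n = k), modWeight n q s

/-- `q^{k̄,(n)}(k)`: probability of a net balance of `k` jumps at maturity while reaching at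
some time a net balance higher than `k̄`. -/
def qup (n m : ℕ) (q : ℤ → ℝ) (kbar : ℕ) (k : ℤ) : ℝ :=
  ∑ s ∈ (paths n m).filter
      (fun s => levelAt n s n = k ∧ ∃ t ≤ n, (kbar : ℤ) + 1 ≤ levelAt n s t),
    pathWeight n q s

/-- `q_{l̄}^{(n)}(k)`: probability of a net balance of `k` jumps at maturity while reaching at
some time a net balance lower than `-l̄`. -/
def qdown (n m : ℕ) (q : ℤ → ℝ) (lbar : ℕ) (k : ℤ) : ℝ :=
  ∑ s ∈ (paths n m).filter
      (fun s => levelAt n s n = k ∧ ∃ t ≤ n, levelAt n s t ≤ -(lbar : ℤ) - 1),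
    pathWeight n q s

/-- `q^{cut,(n)}(k)`: probability of reaching level `k` at maturity without ever leaving the
band `[-l̄, k̄]`. -/
def qcut (n m : ℕ) (q : ℤ → ℝ) (kbar lbar : ℕ) (k : ℤ) : ℝ :=
  ∑ s ∈ (paths n m).filter
      (fun s => levelAt n s n = k ∧
        ∀ t ≤ n, -(lbar : ℤ) ≤ levelAt n s t ∧ levelAt n s t ≤ (kbar : ℤ)),
    pathWeight n q s

/-- `P(j) = C(n,j) p^j (1-p)^(n-j)`. -/
def binomP (n : ℕ) (p : ℝ) (j : ℕ) : ℝ :=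
  (n.choose j : ℝ) * p ^ j * (1 - p) ^ (n - j)

/-- Put payoff at the terminal node `(n, j, k)`. -/
def putPayoff (n : ℕ) (S0 K σ dt h : ℝ) (j : ℕ) (k : ℤ) : ℝ :=
  max (K - S0 * Real.exp ((2 * (j : ℝ) - (n : ℝ)) * (σ * Real.sqrt dt) + h * (k : ℝ))) 0

/-- European put value `V` on the full tree. -/
def Vput (n m : ℕ) (q : ℤ → ℝ) (p S0 K σ τ h r : ℝ) : ℝ :=
  Real.exp (-(r * τ)) *
    ∑ k ∈ Finset.Icc (-((m : ℤ) * n)) ((m : ℤ) * n), ∑ j ∈ Finset.range (n + 1),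
      putPayoff n S0 K σ (τ / n) h j k * binomP n p j * qfull n m q k

/-- European put value `V^{TT}` on the truncated tree. -/
def VTT (n m : ℕ) (q : ℤ → ℝ) (p S0 K σ τ h r : ℝ) (kbar lbar : ℕ) : ℝ :=
  Real.exp (-(r * τ)) *
    ∑ k ∈ Finset.Icc (-(lbar : ℤ)) (kbar : ℤ), ∑ j ∈ Finset.range (n + 1),
      putPayoff n S0 K σ (τ / n) h j k * binomP n p j * qcut n m q kbar lbar k

/-- The sequence `W_i`: `W₁ = w₁`, `W_{i+1} = w_{i+1} + W_i^{(i+1)/i}` (real powers). -/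
def Wseq (w : ℕ → ℝ) : ℕ → ℝ
  | 0 => 0
  | 1 => w 1
  | (i + 2) => w (i + 2) + Wseq w (i + 1) ^ (((i : ℝ) + 2) / ((i : ℝ) + 1))

/-- `M_i = max { W_i, W_i^{(1-i)/i} }` (real powers). -/
def Mseq (w : ℕ → ℝ) (i : ℕ) : ℝ :=
  max (Wseq w i) (Wseq w i ^ ((1 - (i : ℝ)) / (i : ℝ)))

/-- `G = 2 m max{W_m, 1} e^{W_m} ∏_{i=1}^{m-1} M_i²`. -/
def Gconst (w : ℕ → ℝ) (m : ℕ) : ℝ :=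
  2 * m * max (Wseq w m) 1 * Real.exp (Wseq w m) * ∏ i ∈ Finset.Icc 1 (m - 1), (Mseq w i) ^ 2

/-- Value of the underlying at a node with (real) time index `i`, `j` up Brownian moves and
net jump level `l`. -/
def Sval (S0 σ dt h : ℝ) (i : ℝ) (j : ℕ) (l : ℤ) : ℝ :=
  S0 * Real.exp ((2 * (j : ℝ) - i) * (σ * Real.sqrt dt) + (l : ℝ) * h)

/-- Full backward European put price; `VEfull … d j l` is the value `V_E(n-d, j, l)`
(`d` = number of remaining steps). -/
def VEfull (n m : ℕ) (q : ℤ → ℝ) (p dt S0 K σ h r : ℝ) : ℕ → ℕ → ℤ → ℝ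
  | 0, j, l => max (K - Sval S0 σ dt h (n : ℝ) j l) 0
  | (d + 1), j, l =>
      Real.exp (-(r * dt)) *
        ∑ k ∈ Finset.Icc (-(m : ℤ)) (m : ℤ),
          (VEfull n m q p dt S0 K σ h r d (j + 1) (l + k) * p +
            VEfull n m q p dt S0 K σ h r d j (l + k) * (1 - p)) * q k

/-- Full backward American put price; `VAfull … d j l` is the value `V_A(n-d, j, l)`. -/
def VAfull (n m : ℕ) (q : ℤ → ℝ) (p dt S0 K σ h r : ℝ) : ℕ → ℕ → ℤ → ℝ
  | 0, j, l => max (K - Sval S0 σ dt h (n : ℝ) j l) 0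
  | (d + 1), j, l =>
      max
        (Real.exp (-(r * dt)) *
          ∑ k ∈ Finset.Icc (-(m : ℤ)) (m : ℤ),
            (VAfull n m q p dt S0 K σ h r d (j + 1) (l + k) * p +
              VAfull n m q p dt S0 K σ h r d j (l + k) * (1 - p)) * q k)
        (K - Sval S0 σ dt h ((n : ℝ) - (d + 1)) j l)

/-- Truncated backward European put price with boundary value `b`;
`VEtr … d j l` is the value `V_E^b(n-d, j, l)`. -/
def VEtr (n m : ℕ) (q : ℤ → ℝ) (p dt S0 K σ h r b : ℝ) (kbar lbar : ℕ) :
    ℕ → ℕ → ℤ → ℝ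
  | 0, j, l =>
      if -(lbar : ℤ) ≤ l ∧ l ≤ (kbar : ℤ) then max (K - Sval S0 σ dt h (n : ℝ) j l) 0 else b
  | (d + 1), j, l =>
      if -(lbar : ℤ) ≤ l ∧ l ≤ (kbar : ℤ) then
        Real.exp (-(r * dt)) *
          ∑ k ∈ Finset.Icc (-(m : ℤ)) (m : ℤ),
            (VEtr n m q p dt S0 K σ h r b kbar lbar d (j + 1) (l + k) * p +
              VEtr n m q p dt S0 K σ h r b kbar lbar d j (l + k) * (1 - p)) * q k
      else b

/-- Truncated backward American put price with boundary value `b`;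
`VAtr … d j l` is the value `V_A^b(n-d, j, l)`. -/
def VAtr (n m : ℕ) (q : ℤ → ℝ) (p dt S0 K σ h r b : ℝ) (kbar lbar : ℕ) :
    ℕ → ℕ → ℤ → ℝ
  | 0, j, l =>
      if -(lbar : ℤ) ≤ l ∧ l ≤ (kbar : ℤ) then max (K - Sval S0 σ dt h (n : ℝ) j l) 0 else b
  | (d + 1), j, l =>
      if -(lbar : ℤ) ≤ l ∧ l ≤ (kbar : ℤ) then
        max
          (Real.exp (-(r * dt)) *
            ∑ k ∈ Finset.Icc (-(m : ℤ)) (m : ℤ),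
              (VAtr n m q p dt S0 K σ h r b kbar lbar d (j + 1) (l + k) * p +
                VAtr n m q p dt S0 K σ h r b kbar lbar d j (l + k) * (1 - p)) * q k)
          (K - Sval S0 σ dt h ((n : ℝ) - (d + 1)) j l)
      else b

/-- The sum, over all jump-path prefixes that first exit the band `[-l̄, k̄]` at some time
`1 ≤ i ≤ n`, of the prefix probability times `b e^{-r i Δt}`. -/
def exitSum (n m : ℕ) (q : ℤ → ℝ) (r dt : ℝ) (kbar lbar : ℕ) (b : ℝ) : ℝ :=
  ∑ i ∈ Finset.Icc 1 n,
    ∑ y ∈ (paths i m).filter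
        (fun y =>
          (∀ t < i, -(lbar : ℤ) ≤ levelAt i y t ∧ levelAt i y t ≤ (kbar : ℤ)) ∧
          ¬(-(lbar : ℤ) ≤ levelAt i y i ∧ levelAt i y i ≤ (kbar : ℤ))),
      pathWeight i q y * (b * Real.exp (-(r * (i : ℝ) * dt)))

end HScut

open HScut

/-!
With boundary value `0`, a node outside the band contributes nothing, so unrolling the backward
recursion expresses `V_E^0` at a node as the discounted expectation of the terminal payoff of the
tree process killed when its jump level leaves `[-l̄, k̄]`. The killed expectation obeys the same
one-step recursion, because a path stays in the band iff its starting level is in the band and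
its tail stays in the band from the shifted level, and the binomial weights satisfy Pascal's rule.
At the root, grouping the surviving jump paths by their final level gives `q^{cut,(n)}`.
-/

namespace HScut

section JumpPaths

variable {d : ℕ}

theorem levelAt_zero (s : Fin d → ℤ) : levelAt d s 0 = 0 := by
  simp [levelAt]

theorem levelAt_cons (k : ℤ) (s : Fin d → ℤ) (t : ℕ) :
    levelAt (d + 1) (Fin.cons k s) (t + 1) = k + levelAt d s t := by
  simp [levelAt, Finset.sum_filter, Fin.sum_univ_succ]

theorem pathWeight_cons (q : ℤ → ℝ) (k : ℤ) (s : Fin d → ℤ) :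
    pathWeight (d + 1) q (Fin.cons k s) = q k * pathWeight d q s := by
  simp [pathWeight, Fin.prod_univ_succ]

theorem sum_paths_succ {M : Type*} [AddCommMonoid M] (m : ℕ) (F : (Fin (d + 1) → ℤ) → M) :
    ∑ s ∈ paths (d + 1) m, F s =
      ∑ k ∈ Icc (-(m : ℤ)) m, ∑ s ∈ paths d m, F (Fin.cons k s) := by
  have h := filter_piFinset_eq_map_consEquiv (fun _ : Fin (d + 1) => Icc (-(m : ℤ)) m)
    (fun _ => True)
  simp only [filter_true] at h
  rw [paths, h, sum_map, sum_product]
  rfl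

def StaysInBand (kbar lbar : ℕ) (l : ℤ) (s : Fin d → ℤ) : Prop :=
  ∀ t ≤ d, -(lbar : ℤ) ≤ l + levelAt d s t ∧ l + levelAt d s t ≤ kbar

variable {kbar lbar : ℕ} {l : ℤ}

theorem StaysInBand.start {s : Fin d → ℤ} (hs : StaysInBand kbar lbar l s) :
    -(lbar : ℤ) ≤ l ∧ l ≤ kbar := by
  simpa [levelAt_zero] using hs 0 (Nat.zero_le d)

theorem staysInBand_nil_iff (s : Fin 0 → ℤ) :
    StaysInBand kbar lbar l s ↔ -(lbar : ℤ) ≤ l ∧ l ≤ kbar := by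
  refine ⟨StaysInBand.start, fun hl t ht => ?_⟩
  obtain rfl : t = 0 := Nat.le_zero.mp ht
  simpa [levelAt_zero] using hl

theorem staysInBand_cons_iff (k : ℤ) (s : Fin d → ℤ) :
    StaysInBand kbar lbar l (Fin.cons k s) ↔
      (-(lbar : ℤ) ≤ l ∧ l ≤ kbar) ∧ StaysInBand kbar lbar (l + k) s := by
  refine ⟨fun hs => ⟨hs.start, fun t ht => ?_⟩, fun ⟨hl, hs⟩ t ht => ?_⟩
  · simpa [levelAt_cons, add_assoc] using hs (t + 1) (by omega)
  · cases t with
    | zero => simpa [levelAt_zero] using hl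
    | succ t => simpa [levelAt_cons, add_assoc] using hs t (by omega)

end JumpPaths

section Binomial

theorem binomP_succ_succ (d j : ℕ) (p : ℝ) :
    binomP (d + 1) p (j + 1) = p * binomP d p j + (1 - p) * binomP d p (j + 1) := by
  rcases Nat.lt_trichotomy j d with h | rfl | h
  · obtain ⟨e, rfl⟩ := Nat.exists_eq_add_of_lt h
    simp only [binomP, Nat.choose_succ_succ, Nat.cast_add,
      show j + e + 1 + 1 - (j + 1) = e + 1 by omega, show j + e + 1 - j = e + 1 by omega,
      show j + e + 1 - (j + 1) = e by omega]
    ring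
  · simp [binomP, pow_succ]
    ring
  · simp [binomP, Nat.choose_eq_zero_of_lt, h, Nat.lt_succ_of_lt h]

theorem binomP_self_succ (d : ℕ) (p : ℝ) : binomP d p (d + 1) = 0 := by
  simp [binomP]

theorem sum_binomP_succ_mul (d : ℕ) (p : ℝ) (g : ℕ → ℝ) :
    ∑ i ∈ range (d + 1 + 1), binomP (d + 1) p i * g i =
      p * ∑ i ∈ range (d + 1), binomP d p i * g (i + 1) +
        (1 - p) * ∑ i ∈ range (d + 1), binomP d p i * g i := by
  have hshift : ∑ i ∈ range (d + 1), binomP d p i * g i =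
      binomP d p 0 * g 0 + ∑ i ∈ range (d + 1), binomP d p (i + 1) * g (i + 1) := by
    have h := sum_range_succ' (fun i => binomP d p i * g i) (d + 1)
    rw [sum_range_succ, binomP_self_succ, zero_mul, add_zero] at h
    rw [h, add_comm]
  have hzero : binomP (d + 1) p 0 = (1 - p) * binomP d p 0 := by
    simp [binomP, pow_succ]
    ring
  rw [sum_range_succ', hshift, hzero]
  simp only [binomP_succ_succ, add_mul, sum_add_distrib, mul_add, mul_sum, mul_assoc]
  ring

end Binomial

section KilledExpectation

variable (m : ℕ) (q : ℤ → ℝ) (p : ℝ) (kbar lbar : ℕ) (g : ℕ → ℤ → ℝ)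

/-- Undiscounted expectation of `g` after `d` steps of the tree process started at node `(j, l)`
and killed as soon as its jump level leaves `[-l̄, k̄]`. -/
def killedExpect (d j : ℕ) (l : ℤ) : ℝ :=
  ∑ s ∈ (paths d m).filter (StaysInBand kbar lbar l),
    pathWeight d q s * ∑ i ∈ range (d + 1), binomP d p i * g (j + i) (l + levelAt d s d)

variable {m q p kbar lbar g} {d j : ℕ} {l : ℤ}

theorem killedExpect_of_not_mem_band (hl : ¬(-(lbar : ℤ) ≤ l ∧ l ≤ kbar)) :
    killedExpect m q p kbar lbar g d j l = 0 := by
  rw [killedExpect, filter_false_of_mem fun s _ hs => hl hs.start, sum_empty]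

theorem killedExpect_zero (hl : -(lbar : ℤ) ≤ l ∧ l ≤ kbar) :
    killedExpect m q p kbar lbar g 0 j l = g j l := by
  have hpaths : paths 0 m = {Fin.elim0} := by
    simp [paths, Fintype.piFinset_of_isEmpty, eq_iff_true_of_subsingleton]
  simp [killedExpect, hpaths, (staysInBand_nil_iff _).mpr hl, pathWeight, binomP, levelAt_zero]

theorem killedExpect_succ (hl : -(lbar : ℤ) ≤ l ∧ l ≤ kbar) :
    killedExpect m q p kbar lbar g (d + 1) j l =
      ∑ k ∈ Icc (-(m : ℤ)) m,
        (killedExpect m q p kbar lbar g d (j + 1) (l + k) * p +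
          killedExpect m q p kbar lbar g d j (l + k) * (1 - p)) * q k := by
  rw [killedExpect, sum_filter, sum_paths_succ]
  refine sum_congr rfl fun k _ => ?_
  simp only [staysInBand_cons_iff, hl, true_and, pathWeight_cons, levelAt_cons, ← add_assoc]
  rw [← sum_filter, killedExpect, killedExpect, sum_mul, sum_mul, ← sum_add_distrib, sum_mul]
  refine sum_congr rfl fun s _ => ?_
  simp only [sum_binomP_succ_mul, ← add_assoc, Nat.add_right_comm j _ 1]
  ring

theorem killedExpect_eq_sum_qcut :
    killedExpect m q p kbar lbar g d 0 0 =
      ∑ k ∈ Icc (-(lbar : ℤ)) kbar, ∑ i ∈ range (d + 1),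
        g i k * binomP d p i * qcut d m q kbar lbar k := by
  have hfinal : ∀ s ∈ (paths d m).filter (StaysInBand kbar lbar 0),
      levelAt d s d ∈ Icc (-(lbar : ℤ)) kbar := fun s hs => by
    simpa using (mem_filter.mp hs).2 d le_rfl
  rw [killedExpect, ← sum_fiberwise_of_maps_to hfinal]
  refine sum_congr rfl fun k _ => ?_
  have hfiber : ((paths d m).filter (StaysInBand kbar lbar 0)).filter
      (fun s => levelAt d s d = k) = (paths d m).filter (fun s => levelAt d s d = k ∧
        ∀ t ≤ d, -(lbar : ℤ) ≤ levelAt d s t ∧ levelAt d s t ≤ kbar) := by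
    ext s
    simp only [mem_filter, StaysInBand, zero_add]
    tauto
  have hlevel : ∀ s ∈ (paths d m).filter (fun s => levelAt d s d = k ∧
      ∀ t ≤ d, -(lbar : ℤ) ≤ levelAt d s t ∧ levelAt d s t ≤ kbar),
      pathWeight d q s * ∑ i ∈ range (d + 1), binomP d p i * g (0 + i) (0 + levelAt d s d) =
        pathWeight d q s * ∑ i ∈ range (d + 1), binomP d p i * g i k := fun s hs => by
    simp [(mem_filter.mp hs).2.1]
  rw [hfiber, sum_congr rfl hlevel, ← sum_mul, ← qcut, mul_sum]
  exact sum_congr rfl fun i _ => by ring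

end KilledExpectation

theorem VEtr_zero_eq_killedExpect (n m : ℕ) (q : ℤ → ℝ) (p dt S0 K σ h r : ℝ)
    (kbar lbar d j : ℕ) (l : ℤ) :
    VEtr n m q p dt S0 K σ h r 0 kbar lbar d j l =
      Real.exp (-(r * d * dt)) *
        killedExpect m q p kbar lbar (fun j l => max (K - Sval S0 σ dt h n j l) 0) d j l := by
  induction d generalizing j l with
  | zero =>
    by_cases hl : -(lbar : ℤ) ≤ l ∧ l ≤ kbar
    · simp [VEtr, hl, killedExpect_zero hl]
    · simp [VEtr, hl, killedExpect_of_not_mem_band hl]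
  | succ d ih =>
    by_cases hl : -(lbar : ℤ) ≤ l ∧ l ≤ kbar
    · have hdiscount : Real.exp (-(r * (d + 1 : ℕ) * dt)) =
          Real.exp (-(r * dt)) * Real.exp (-(r * d * dt)) := by
        rw [← Real.exp_add]
        congr 1
        push_cast
        ring
      rw [VEtr, if_pos hl, killedExpect_succ hl, hdiscount, mul_assoc,
        mul_sum (a := Real.exp (-(r * d * dt)))]
      simp only [ih]
      exact congrArg _ (sum_congr rfl fun k _ => by ring)
    · simp [VEtr, hl, killedExpect_of_not_mem_band hl]

end HScut

theorem VE_zero_eq_VTT_general (n m : ℕ) (hn : 1 ≤ n) (q : ℤ → ℝ)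
    (S0 K σ τ h r p : ℝ) (kbar lbar : ℕ) :
    VEtr n m q p (τ / n) S0 K σ h r 0 kbar lbar n 0 0 =
      VTT n m q p S0 K σ τ h r kbar lbar := by
  have hdiscount : r * n * (τ / n) = r * τ := by
    field_simp [show (n : ℝ) ≠ 0 from Nat.cast_ne_zero.mpr (by omega)]
  rw [VEtr_zero_eq_killedExpect, killedExpect_eq_sum_qcut, VTT, hdiscount]
  simp only [putPayoff, Sval, mul_comm h]

/-- Lemma: with boundary value `b = 0`, the truncated backward European put price equals the
discounted truncated forward expectation: `V_E^0(0,0,0) = V^{TT}`. -/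
theorem VE_zero_eq_VTT (n m : ℕ) (hn : 1 ≤ n) (hm : 1 ≤ m) (q : ℤ → ℝ)
    (hq : ∀ l : ℤ, -(m : ℤ) ≤ l → l ≤ (m : ℤ) → 0 ≤ q l)
    (hsum : ∑ l ∈ Finset.Icc (-(m : ℤ)) (m : ℤ), q l = 1)
    (S0 K σ τ h r p : ℝ) (hS0 : 0 < S0) (hK : 0 < K) (hh : 0 < h) (hτ : 0 < τ)
    (hp0 : 0 ≤ p) (hp1 : p ≤ 1) (kbar lbar : ℕ) :
    VEtr n m q p (τ / n) S0 K σ h r 0 kbar lbar n 0 0 =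
      VTT n m q p S0 K σ τ h r kbar lbar :=
  VE_zero_eq_VTT_general n m hn q S0 K σ τ h r p kbar lbar
end
end

section
/- Assume r ≥ 0 and max(q₁, q₋₁) > 0. Let ε > 0 and let k̄ = l̄ be a nonnegative integer with k̄ ≥ max{ m·⌈2W_m − 1⌉ − 1 , m·⌈W_m·e − ln ε + ln(4m(m+1)KG)⌉ − 1 }. Then the truncated backward American put price with boundary value K satisfies |V_A^K(0,0,0) − V_A(0,0,0)| < ε, where V_A is the full Hilliard–Schwartz backward American put price. -/
open Finset

open scoped Classical

noncomputable section

open HScut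

/-!
Backward induction gives `V_A ≤ V_A^K ≤ V_A + K E`, where `E` is the probability that the jump
level leaves the band `[-l̄, k̄]` before maturity: all prices lie in `[0, K]` and the truncated
price equals `K` off the band. Leaving the band forces the upward (or downward) jumps to add up
to more than `k̄`. Recording how many jumps of each size `i` occur as a profile `ν`, this
probability is dominated, step by step, by the Poisson-type sum of `∏ᵢ wᵢ^{νᵢ} / νᵢ!` over the
profiles of size `∑ i νᵢ > k̄`. Splitting off the largest jump size and applying the binomial
theorem bounds the mass of the profiles of size `N` by `W_m^{N/m} / ⌊N/m⌋!`; this is where the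
recursion `W_{i+1} = w_{i+1} + W_i^{(i+1)/i}` comes from. Finally
`W^{N/m} / ⌊N/m⌋! ≤ max(W, 1) e^{W e} e^{1 - N/m}`, and the geometric tail from `N = k̄ + 1` is
below `ε / K` by the choice of `k̄`.
-/

namespace HScut

section BackwardInduction

variable {m : ℕ} {q : ℤ → ℝ} {p c : ℝ}

def backwardStep (m : ℕ) (q : ℤ → ℝ) (p c : ℝ) (F : ℕ → ℤ → ℝ) (j : ℕ) (l : ℤ) : ℝ :=
  c * ∑ k ∈ Icc (-(m : ℤ)) m, (F (j + 1) (l + k) * p + F j (l + k) * (1 - p)) * q k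

theorem backwardStep_mono (hq : ∀ k ∈ Icc (-(m : ℤ)) m, 0 ≤ q k) (hp0 : 0 ≤ p) (hp1 : p ≤ 1)
    (hc : 0 ≤ c) {F G : ℕ → ℤ → ℝ} (hFG : ∀ j l, F j l ≤ G j l) (j : ℕ) (l : ℤ) :
    backwardStep m q p c F j l ≤ backwardStep m q p c G j l := by
  unfold backwardStep
  gcongr with k hk
  · exact hq k hk
  all_goals exact hFG _ _

theorem backwardStep_const (hsum : ∑ k ∈ Icc (-(m : ℤ)) m, q k = 1) (a : ℝ) (j : ℕ) (l : ℤ) :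
    backwardStep m q p c (fun _ _ => a) j l = c * a := by
  simp only [backwardStep, ← mul_sum, hsum]
  ring

theorem backwardStep_add_mul (F : ℕ → ℤ → ℝ) (a : ℝ) (e : ℤ → ℝ) (j : ℕ) (l : ℤ) :
    backwardStep m q p c (fun j l => F j l + a * e l) j l =
      backwardStep m q p c F j l + c * (a * ∑ k ∈ Icc (-(m : ℤ)) m, e (l + k) * q k) := by
  simp only [backwardStep, mul_sum, ← sum_add_distrib]
  exact sum_congr rfl fun k _ => by ring

variable {n : ℕ} {dt S0 K σ h r : ℝ} {kbar lbar : ℕ}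

theorem VAfull_succ (d j : ℕ) (l : ℤ) :
    VAfull n m q p dt S0 K σ h r (d + 1) j l =
      max (backwardStep m q p (Real.exp (-(r * dt))) (VAfull n m q p dt S0 K σ h r d) j l)
        (K - Sval S0 σ dt h ((n : ℝ) - (d + 1)) j l) :=
  rfl

theorem VAtr_succ (d j : ℕ) (l : ℤ) :
    VAtr n m q p dt S0 K σ h r K kbar lbar (d + 1) j l =
      if -(lbar : ℤ) ≤ l ∧ l ≤ (kbar : ℤ) then
        max (backwardStep m q p (Real.exp (-(r * dt)))
            (VAtr n m q p dt S0 K σ h r K kbar lbar d) j l)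
          (K - Sval S0 σ dt h ((n : ℝ) - (d + 1)) j l)
      else K :=
  rfl

theorem VAfull_mem_Icc (hq : ∀ k ∈ Icc (-(m : ℤ)) m, 0 ≤ q k)
    (hsum : ∑ k ∈ Icc (-(m : ℤ)) m, q k = 1) (hS0 : 0 < S0) (hK : 0 ≤ K) (hp0 : 0 ≤ p)
    (hp1 : p ≤ 1) (hrdt : 0 ≤ r * dt) (d j : ℕ) (l : ℤ) :
    VAfull n m q p dt S0 K σ h r d j l ∈ Set.Icc 0 K := by
  have hS : ∀ t j l, 0 < Sval S0 σ dt h t j l := fun _ _ _ => mul_pos hS0 (Real.exp_pos _)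
  induction d generalizing j l with
  | zero => exact ⟨le_max_right _ _, max_le (by linarith [hS n j l]) hK⟩
  | succ d ih =>
    have hc : Real.exp (-(r * dt)) ≤ 1 := Real.exp_le_one_iff.2 (by linarith)
    have hlo := backwardStep_mono hq hp0 hp1 (Real.exp_pos (-(r * dt))).le
      (fun j l => (ih j l).1) j l
    have hhi := backwardStep_mono hq hp0 hp1 (Real.exp_pos (-(r * dt))).le
      (fun j l => (ih j l).2) j l
    rw [backwardStep_const hsum] at hlo hhi
    rw [VAfull_succ]
    refine ⟨le_max_of_le_left (by simpa using hlo), max_le ?_ (by linarith [hS (n - (d + 1)) j l])⟩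
    nlinarith

/-- Probability that the jump level, started at `l`, leaves the band `[-lbar, kbar]` within
`d` steps. -/
def bandExitProb (m : ℕ) (q : ℤ → ℝ) (kbar lbar : ℕ) : ℕ → ℤ → ℝ
  | 0, l => if -(lbar : ℤ) ≤ l ∧ l ≤ (kbar : ℤ) then 0 else 1
  | d + 1, l => if -(lbar : ℤ) ≤ l ∧ l ≤ (kbar : ℤ) then
      ∑ k ∈ Icc (-(m : ℤ)) m, bandExitProb m q kbar lbar d (l + k) * q k
    else 1

theorem bandExitProb_nonneg (hq : ∀ k ∈ Icc (-(m : ℤ)) m, 0 ≤ q k) (d : ℕ) (l : ℤ) :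
    0 ≤ bandExitProb m q kbar lbar d l := by
  induction d generalizing l with
  | zero => unfold bandExitProb; split_ifs <;> norm_num
  | succ d ih =>
    unfold bandExitProb
    split_ifs
    · exact sum_nonneg fun k hk => mul_nonneg (ih _) (hq k hk)
    · norm_num

theorem VAfull_le_VAtr (hq : ∀ k ∈ Icc (-(m : ℤ)) m, 0 ≤ q k)
    (hsum : ∑ k ∈ Icc (-(m : ℤ)) m, q k = 1) (hS0 : 0 < S0) (hK : 0 ≤ K) (hp0 : 0 ≤ p)
    (hp1 : p ≤ 1) (hrdt : 0 ≤ r * dt) (d j : ℕ) (l : ℤ) :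
    VAfull n m q p dt S0 K σ h r d j l ≤ VAtr n m q p dt S0 K σ h r K kbar lbar d j l := by
  have hbound := VAfull_mem_Icc (n := n) (σ := σ) (h := h) hq hsum hS0 hK hp0 hp1 hrdt
  induction d generalizing j l with
  | zero =>
    unfold VAtr
    split_ifs
    · rfl
    · exact (hbound 0 j l).2
  | succ d ih =>
    rw [VAtr_succ]
    split_ifs
    · exact max_le_max_right _
        (backwardStep_mono hq hp0 hp1 (Real.exp_pos _).le (fun j l => ih j l) j l)
    · exact (hbound _ j l).2

theorem VAtr_le_VAfull_add (hq : ∀ k ∈ Icc (-(m : ℤ)) m, 0 ≤ q k)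
    (hsum : ∑ k ∈ Icc (-(m : ℤ)) m, q k = 1) (hS0 : 0 < S0) (hK : 0 ≤ K) (hp0 : 0 ≤ p)
    (hp1 : p ≤ 1) (hrdt : 0 ≤ r * dt) (d j : ℕ) (l : ℤ) :
    VAtr n m q p dt S0 K σ h r K kbar lbar d j l ≤
      VAfull n m q p dt S0 K σ h r d j l + K * bandExitProb m q kbar lbar d l := by
  have hbound := VAfull_mem_Icc (n := n) (σ := σ) (h := h) hq hsum hS0 hK hp0 hp1 hrdt
  induction d generalizing j l with
  | zero =>
    unfold VAtr bandExitProb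
    split_ifs
    · simp [VAfull]
    · linarith [(hbound 0 j l).1]
  | succ d ih =>
    rw [VAtr_succ, VAfull_succ]
    unfold bandExitProb
    split_ifs
    · have hc : Real.exp (-(r * dt)) ≤ 1 := Real.exp_le_one_iff.2 (by linarith)
      have hE : 0 ≤ K * ∑ k ∈ Icc (-(m : ℤ)) m, bandExitProb m q kbar lbar d (l + k) * q k :=
        mul_nonneg hK (sum_nonneg fun k hk => mul_nonneg (bandExitProb_nonneg hq _ _) (hq k hk))
      have hstep := backwardStep_mono hq hp0 hp1 (Real.exp_pos (-(r * dt))).le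
        (fun j l => ih j l) j l
      rw [backwardStep_add_mul] at hstep
      replace hstep := hstep.trans (add_le_add_right (mul_le_of_le_one_left hE hc) _)
      exact max_le (hstep.trans (add_le_add_left (le_max_left _ _) _))
        ((le_max_right _ _).trans (le_add_of_nonneg_right hE))
    · rw [← VAfull_succ]
      linarith [(hbound (d + 1) j l).1]

end BackwardInduction

section Profiles

variable {k : ℕ} {w : ℕ → ℝ}

/-- A profile `ν : Fin k → ℕ` records `ν i` jumps of size `i + 1`. -/
def profileWeight (w : ℕ → ℝ) (ν : Fin k → ℕ) : ℝ :=
  ∏ i : Fin k, w ((i : ℕ) + 1) ^ ν i / ((ν i).factorial : ℝ)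

def profileSize (ν : Fin k → ℕ) : ℕ :=
  ∑ i : Fin k, ((i : ℕ) + 1) * ν i

def profileBox (k d : ℕ) : Finset (Fin k → ℕ) :=
  Fintype.piFinset fun _ => range (d + 1)

theorem profileWeight_nonneg (hw : ∀ i : Fin k, 0 ≤ w (i + 1)) (ν : Fin k → ℕ) :
    0 ≤ profileWeight w ν :=
  prod_nonneg fun i _ => by have := hw i; positivity

theorem profileWeight_zero (w : ℕ → ℝ) : profileWeight w (0 : Fin k → ℕ) = 1 := by
  simp [profileWeight]

theorem profileWeight_const_mul (c : ℝ) (w : ℕ → ℝ) (ν : Fin k → ℕ) :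
    profileWeight (fun i => c * w i) ν = c ^ (∑ i, ν i) * profileWeight w ν := by
  simp only [profileWeight, ← prod_pow_eq_pow_sum, ← prod_mul_distrib, mul_pow, mul_div_assoc]

theorem profileWeight_add_single (w : ℕ → ℝ) (ν : Fin k → ℕ) (i : Fin k) :
    profileWeight w (ν + Pi.single i 1) * (ν i + 1) = w (i + 1) * profileWeight w ν := by
  have hcoord : ∀ j : Fin k, w (j + 1) ^ (ν + Pi.single i 1 : Fin k → ℕ) j /
      (((ν + Pi.single i 1 : Fin k → ℕ) j).factorial : ℝ) =
        w (j + 1) ^ ν j / ((ν j).factorial : ℝ) * if j = i then w (i + 1) / (ν i + 1) else 1 := by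
    intro j
    by_cases hj : j = i
    · subst hj
      simp only [Pi.add_apply, Pi.single_eq_same, if_true, Nat.factorial_succ, pow_succ]
      push_cast
      field_simp
    · simp [hj]
  simp only [profileWeight, hcoord, prod_mul_distrib, prod_ite_eq', mem_univ, if_true]
  field_simp

theorem profileSize_add (ν μ : Fin k → ℕ) :
    profileSize (ν + μ) = profileSize ν + profileSize μ := by
  simp only [profileSize, Pi.add_apply, mul_add, sum_add_distrib]

theorem profileSize_single (i : Fin k) : profileSize (Pi.single i 1 : Fin k → ℕ) = i + 1 := by
  simp [profileSize, Pi.single_apply]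

theorem add_single_mem_profileBox {d : ℕ} {ν : Fin k → ℕ} (hν : ν ∈ profileBox k d) (i : Fin k) :
    ν + Pi.single i 1 ∈ profileBox k (d + 1) := by
  simp only [profileBox, Fintype.mem_piFinset, mem_range] at hν ⊢
  intro j
  have := hν j
  by_cases hj : j = i
  · subst hj; simp; omega
  · simp [hj]; omega

theorem profileBox_mono {d e : ℕ} (hde : d ≤ e) : profileBox k d ⊆ profileBox k e :=
  Fintype.piFinset_subset _ _ fun _ => range_subset_range.2 (by omega)

end Profiles

theorem pow_add_mul_pow_pred_le {d : ℝ} (hd : 0 ≤ d) (s : ℕ) :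
    d ^ s + s * d ^ (s - 1) ≤ (d + 1) ^ s := by
  rcases s with _ | t
  · simp
  rw [add_pow, sum_range_succ, sum_range_succ, Nat.add_sub_cancel, Nat.choose_succ_self_right]
  have hrest : 0 ≤ ∑ x ∈ range t, d ^ x * 1 ^ (t + 1 - x) * ((t + 1).choose x : ℝ) :=
    sum_nonneg fun _ _ => by positivity
  simp only [one_pow, mul_one, Nat.sub_self, Nat.choose_self, Nat.cast_one,
    Nat.succ_sub (Nat.le_refl t)] at hrest ⊢
  push_cast
  linarith

theorem sum_Icc_filter_pos_eq_sum_fin {M : Type*} [AddCommMonoid M] (m : ℕ) (f : ℤ → M) :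
    ∑ k ∈ Icc (-(m : ℤ)) m with 0 < k, f k = ∑ i : Fin m, f ((i : ℕ) + 1) := by
  rw [Fin.sum_univ_eq_sum_range (fun i => f ((i : ℕ) + 1)),
    ← sum_image (g := fun i : ℕ => (i : ℤ) + 1) (fun _ _ _ _ h => by simpa using h)]
  congr 1
  ext k
  simp only [mem_filter, mem_Icc, mem_image, mem_range]
  constructor
  · rintro ⟨⟨-, hk⟩, hk0⟩
    exact ⟨(k - 1).toNat, by omega, by omega⟩
  · rintro ⟨i, hi, rfl⟩
    omega

theorem sum_Icc_comp_neg {M : Type*} [AddCommMonoid M] (m : ℕ) (f : ℤ → M) :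
    ∑ k ∈ Icc (-(m : ℤ)) m, f (-k) = ∑ k ∈ Icc (-(m : ℤ)) m, f k :=
  sum_nbij' Neg.neg Neg.neg (by simp; omega) (by simp; omega) (by simp) (by simp) (by simp)

section PoissonTail

variable {m : ℕ} {a : ℕ → ℝ}

/-- Poisson-type majorant for the probability that the upward jumps of `d` steps, with
size-`(i + 1)` jumps of probability at most `a (i + 1)`, add up to at least `u`. -/
def poissonTail (m : ℕ) (a : ℕ → ℝ) (d : ℕ) (u : ℤ) : ℝ :=
  ∑ ν ∈ profileBox m d with u ≤ profileSize ν, profileWeight (fun i => d * a i) ν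

theorem profileWeight_natCast_mul_nonneg (ha : ∀ i : Fin m, 0 ≤ a (i + 1)) (d : ℕ)
    (ν : Fin m → ℕ) : 0 ≤ profileWeight (fun i => (d : ℝ) * a i) ν :=
  profileWeight_nonneg (fun i => mul_nonneg d.cast_nonneg (ha i)) ν

theorem poissonTail_nonneg (ha : ∀ i : Fin m, 0 ≤ a (i + 1)) (d : ℕ) (u : ℤ) :
    0 ≤ poissonTail m a d u :=
  sum_nonneg fun _ _ => profileWeight_natCast_mul_nonneg ha d _

theorem one_le_poissonTail (ha : ∀ i : Fin m, 0 ≤ a (i + 1)) (d : ℕ) {u : ℤ} (hu : u ≤ 0) :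
    1 ≤ poissonTail m a d u := by
  have hmem : (0 : Fin m → ℕ) ∈ (profileBox m d).filter (u ≤ profileSize ·) := by
    simp [profileBox, profileSize, hu]
  rw [← profileWeight_zero (fun i => d * a i)]
  exact single_le_sum (f := profileWeight (fun i => d * a i))
    (fun _ _ => profileWeight_natCast_mul_nonneg ha d _) hmem

theorem poissonTail_anti (ha : ∀ i : Fin m, 0 ≤ a (i + 1)) (d : ℕ) {u v : ℤ} (huv : u ≤ v) :
    poissonTail m a d v ≤ poissonTail m a d u :=
  sum_le_sum_of_subset_of_nonneg (monotone_filter_right _ fun _ _ => huv.trans)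
    fun _ _ _ => profileWeight_natCast_mul_nonneg ha d _

/-- The first two terms of `(d + 1)^s ≥ d^s + s d^(s-1)` account for a step without an upward
jump and a step with one jump of size `i + 1`. -/
theorem poissonTail_add_sum_le_succ (ha : ∀ i : Fin m, 0 ≤ a (i + 1)) (d : ℕ) (u : ℤ) :
    poissonTail m a d u + ∑ i : Fin m, a (i + 1) * poissonTail m a d (u - (i + 1)) ≤
      poissonTail m a (d + 1) u := by
  set T := (profileBox m (d + 1)).filter (fun ω => u ≤ profileSize ω)
  have hpw := profileWeight_nonneg ha
  have hstay : poissonTail m a d u ≤ ∑ ω ∈ T, (d : ℝ) ^ (∑ i, ω i) * profileWeight a ω := by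
    simp only [poissonTail, profileWeight_const_mul]
    exact sum_le_sum_of_subset_of_nonneg (filter_subset_filter _ (profileBox_mono d.le_succ))
      fun ω _ _ => mul_nonneg (by positivity) (hpw ω)
  have hjump : ∀ i : Fin m, a (i + 1) * poissonTail m a d (u - (i + 1)) ≤
      ∑ ω ∈ T, (ω i : ℝ) * ((d : ℝ) ^ (∑ j, ω j - 1) * profileWeight a ω) := by
    intro i
    calc a (i + 1) * poissonTail m a d (u - (i + 1))
        = ∑ ν ∈ (profileBox m d).filter (fun ν => u - (i + 1) ≤ profileSize ν),
            ((ν + Pi.single i 1 : Fin m → ℕ) i : ℝ) *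
              ((d : ℝ) ^ (∑ j, (ν + Pi.single i 1 : Fin m → ℕ) j - 1) *
              profileWeight a (ν + Pi.single i 1)) := by
          rw [poissonTail, mul_sum]
          refine sum_congr rfl fun ν _ => ?_
          simp only [profileWeight_const_mul, Pi.add_apply, Pi.single_eq_same, sum_add_distrib,
            Finset.sum_pi_single', mem_univ, if_true, Nat.add_sub_cancel]
          push_cast
          linear_combination -(d : ℝ) ^ (∑ i, ν i) * profileWeight_add_single a ν i
      _ = ∑ ω ∈ ((profileBox m d).filter (fun ν => u - (i + 1) ≤ profileSize ν)).image
            (· + Pi.single i 1), (ω i : ℝ) * ((d : ℝ) ^ (∑ j, ω j - 1) * profileWeight a ω) :=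
          by rw [sum_image (add_left_injective _).injOn]
      _ ≤ _ := by
          refine sum_le_sum_of_subset_of_nonneg ?_ fun ω _ _ => by have := hpw ω; positivity
          intro ω hω
          simp only [mem_image, mem_filter] at hω
          obtain ⟨ν, ⟨hν, hsize⟩, rfl⟩ := hω
          refine mem_filter.2 ⟨add_single_mem_profileBox hν i, ?_⟩
          rw [profileSize_add, profileSize_single]
          push_cast
          omega
  calc poissonTail m a d u + ∑ i : Fin m, a (i + 1) * poissonTail m a d (u - (i + 1))
      ≤ ∑ ω ∈ T, ((d : ℝ) ^ (∑ i, ω i) + (∑ i, ω i : ℕ) * (d : ℝ) ^ (∑ i, ω i - 1)) *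
          profileWeight a ω := by
        refine (add_le_add hstay (sum_le_sum fun i _ => hjump i)).trans_eq ?_
        rw [sum_comm, ← sum_add_distrib]
        refine sum_congr rfl fun ω _ => ?_
        rw [← sum_mul, Nat.cast_sum]
        ring
    _ ≤ ∑ ω ∈ T, ((d : ℝ) + 1) ^ (∑ i, ω i) * profileWeight a ω :=
        sum_le_sum fun ω _ => mul_le_mul_of_nonneg_right
          (pow_add_mul_pow_pred_le d.cast_nonneg _) (hpw ω)
    _ = poissonTail m a (d + 1) u := by
        simp only [poissonTail, profileWeight_const_mul, Nat.cast_succ]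
        rfl

theorem sum_poissonTail_mul_le_succ {ρ : ℤ → ℝ} (ha : ∀ i : Fin m, 0 ≤ a (i + 1))
    (hρ : ∀ k ∈ Icc (-(m : ℤ)) m, 0 ≤ ρ k) (hρ1 : ∑ k ∈ Icc (-(m : ℤ)) m, ρ k = 1)
    (hρa : ∀ i : Fin m, ρ ((i : ℕ) + 1) ≤ a (i + 1)) (d : ℕ) (u : ℤ) :
    ∑ k ∈ Icc (-(m : ℤ)) m, poissonTail m a d (u - k) * ρ k ≤ poissonTail m a (d + 1) u := by
  have hB := poissonTail_nonneg ha d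
  have hjump : ∀ i : Fin m, poissonTail m a d (u - ((i : ℕ) + 1)) * ρ ((i : ℕ) + 1) ≤
      a (i + 1) * poissonTail m a d (u - (i + 1)) := fun i => by
    rw [mul_comm]
    exact mul_le_mul_of_nonneg_right (hρa i) (hB _)
  have hstay : ∑ k ∈ Icc (-(m : ℤ)) m with ¬0 < k, poissonTail m a d (u - k) * ρ k ≤
      poissonTail m a d u :=
    calc _ ≤ ∑ k ∈ Icc (-(m : ℤ)) m with ¬0 < k, poissonTail m a d u * ρ k :=
          sum_le_sum fun k hk => mul_le_mul_of_nonneg_right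
            (poissonTail_anti ha d (by simp at hk; omega)) (hρ k (mem_of_mem_filter k hk))
      _ ≤ poissonTail m a d u * ∑ k ∈ Icc (-(m : ℤ)) m, ρ k := by
          rw [← mul_sum]
          exact mul_le_mul_of_nonneg_left
            (sum_le_sum_of_subset_of_nonneg (filter_subset _ _) fun k hk _ => hρ k hk) (hB u)
      _ = poissonTail m a d u := by rw [hρ1, mul_one]
  rw [← sum_filter_add_sum_filter_not _ (0 < ·), sum_Icc_filter_pos_eq_sum_fin]
  linarith [sum_le_sum fun i (_ : i ∈ univ) => hjump i, poissonTail_add_sum_le_succ ha d u]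

theorem one_le_poissonTail_add (ha : ∀ i : Fin m, 0 ≤ a (i + 1)) {kbar lbar : ℕ} (d : ℕ)
    {l : ℤ} (hl : ¬(-(lbar : ℤ) ≤ l ∧ l ≤ kbar)) :
    1 ≤ poissonTail m a d (kbar + 1 - l) + poissonTail m a d (lbar + 1 + l) := by
  rcases not_and_or.1 hl with hl | hl
  · linarith [poissonTail_nonneg ha d (kbar + 1 - l), one_le_poissonTail ha d (u := lbar + 1 + l)
      (by omega)]
  · linarith [poissonTail_nonneg ha d (lbar + 1 + l), one_le_poissonTail ha d (u := kbar + 1 - l)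
      (by omega)]

/-- Leaving the band requires the upward jumps to overshoot `kbar` or the downward jumps to
undershoot `-lbar`. -/
theorem bandExitProb_le_poissonTail_add {q : ℤ → ℝ} {kbar lbar : ℕ}
    (hq : ∀ k ∈ Icc (-(m : ℤ)) m, 0 ≤ q k) (hsum : ∑ k ∈ Icc (-(m : ℤ)) m, q k = 1)
    (hqa : ∀ i : Fin m, q ((i : ℕ) + 1) ≤ a (i + 1) ∧ q (-((i : ℕ) + 1)) ≤ a (i + 1))
    (d : ℕ) (l : ℤ) :
    bandExitProb m q kbar lbar d l ≤
      poissonTail m a d (kbar + 1 - l) + poissonTail m a d (lbar + 1 + l) := by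
  have ha : ∀ i : Fin m, 0 ≤ a (i + 1) := fun i =>
    (hq _ (by simp; omega)).trans (hqa i).1
  have hq' : ∀ k ∈ Icc (-(m : ℤ)) m, 0 ≤ q (-k) := fun k hk => hq _ (by simp at hk ⊢; omega)
  have hsum' : ∑ k ∈ Icc (-(m : ℤ)) m, q (-k) = 1 := (sum_Icc_comp_neg m q).trans hsum
  induction d generalizing l with
  | zero =>
    unfold bandExitProb
    split_ifs with hl
    · exact add_nonneg (poissonTail_nonneg ha 0 _) (poissonTail_nonneg ha 0 _)
    · exact one_le_poissonTail_add ha 0 hl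
  | succ d ih =>
    unfold bandExitProb
    split_ifs with hl
    · calc ∑ k ∈ Icc (-(m : ℤ)) m, bandExitProb m q kbar lbar d (l + k) * q k
          ≤ ∑ k ∈ Icc (-(m : ℤ)) m, (poissonTail m a d (kbar + 1 - l - k) * q k +
              poissonTail m a d (lbar + 1 + l - -k) * q (- -k)) :=
            sum_le_sum fun k hk => by
              rw [neg_neg, ← add_mul, sub_sub, sub_neg_eq_add, add_assoc (lbar + 1 : ℤ)]
              exact mul_le_mul_of_nonneg_right (ih (l + k)) (hq k hk)
        _ ≤ poissonTail m a (d + 1) (kbar + 1 - l) + poissonTail m a (d + 1) (lbar + 1 + l) := by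
            rw [sum_add_distrib,
              sum_Icc_comp_neg m (fun k => poissonTail m a d (lbar + 1 + l - k) * q (-k))]
            exact add_le_add (sum_poissonTail_mul_le_succ ha hq hsum (fun i => (hqa i).1) d _)
              (sum_poissonTail_mul_le_succ ha hq' hsum' (fun i => (hqa i).2) d _)
    · exact one_le_poissonTail_add ha (d + 1) hl

end PoissonTail

section ProfileMass

variable {k : ℕ} {w : ℕ → ℝ}

theorem sum_profileBox_succ (D : ℕ) (g : (Fin (k + 1) → ℕ) → ℝ) :
    ∑ ν ∈ profileBox (k + 1) D, g ν =
      ∑ j ∈ range (D + 1), ∑ ν ∈ profileBox k D, g (Fin.snoc ν j) := by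
  rw [← sum_product']
  refine sum_nbij' (fun ν => (ν (Fin.last k), Fin.init ν)) (fun x => Fin.snoc x.2 x.1)
    ?_ ?_ ?_ ?_ ?_
  · intro ν hν
    simp only [profileBox, Fintype.mem_piFinset, mem_product] at hν ⊢
    exact ⟨hν _, fun i => hν _⟩
  · intro x hx
    simp only [profileBox, Fintype.mem_piFinset, mem_product] at hx ⊢
    intro i
    refine Fin.lastCases ?_ (fun i => ?_) i
    · simpa using hx.1
    · simpa using hx.2 i
  all_goals intro _ _; simp

theorem profileSize_snoc (ν : Fin k → ℕ) (j : ℕ) :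
    profileSize (Fin.snoc ν j : Fin (k + 1) → ℕ) = profileSize ν + (k + 1) * j := by
  simp [profileSize, Fin.sum_univ_castSucc]

theorem profileWeight_snoc (w : ℕ → ℝ) (ν : Fin k → ℕ) (j : ℕ) :
    profileWeight w (Fin.snoc ν j : Fin (k + 1) → ℕ) =
      profileWeight w ν * (w (k + 1) ^ j / j.factorial) := by
  simp only [profileWeight, Fin.prod_univ_castSucc, Fin.snoc_castSucc, Fin.snoc_last,
    Fin.val_castSucc, Fin.val_last]

theorem Wseq_succ (w : ℕ → ℝ) (hk : 1 ≤ k) :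
    Wseq w (k + 1) = w (k + 1) + Wseq w k ^ (((k : ℝ) + 1) / k) := by
  obtain ⟨k, rfl⟩ := Nat.exists_eq_add_of_le' hk
  simp only [Wseq]
  push_cast
  ring_nf

theorem Wseq_pos (hw1 : 0 < w 1) (hw : ∀ i : Fin k, 0 ≤ w (i + 1)) (hk : 1 ≤ k) :
    0 < Wseq w k := by
  induction k with
  | zero => omega
  | succ k ih =>
    rcases Nat.eq_zero_or_pos k with rfl | hk
    · exact hw1
    rw [Wseq_succ w hk]
    have := Real.rpow_pos_of_pos (ih (fun i => hw i.castSucc) hk) (((k : ℝ) + 1) / k)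
    have hlast : 0 ≤ w (k + 1) := by simpa using hw (Fin.last k)
    linarith

theorem add_pow_div_factorial (a b : ℝ) (F : ℕ) :
    ∑ j ∈ range (F + 1), a ^ j / j.factorial * (b ^ (F - j) / (F - j).factorial) =
      (a + b) ^ F / F.factorial := by
  rw [add_pow, sum_div]
  refine sum_congr rfl fun j hj => ?_
  rw [Nat.cast_choose ℝ (Nat.lt_succ_iff.1 (mem_range.1 hj))]
  field_simp

theorem rpow_natCast_div_eq {x : ℝ} (hx : 0 < x) {k : ℕ} (hk : 1 ≤ k) (c r : ℕ) :
    x ^ ((((k + 1) * c + r : ℕ) : ℝ) / k) =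
      (x ^ (((k : ℝ) + 1) / k)) ^ c * (x ^ (((k : ℝ) + 1) / k)) ^ ((r : ℝ) / (k + 1)) := by
  have hk0 : (0 : ℝ) < k := by exact_mod_cast hk
  rw [← Real.rpow_natCast, ← Real.rpow_mul hx.le, ← Real.rpow_mul hx.le, ← Real.rpow_add hx]
  congr 1
  push_cast
  field_simp

theorem sum_profileWeight_size_eq_succ (w : ℕ → ℝ) (D N : ℕ) :
    ∑ ν ∈ profileBox (k + 1) D with profileSize ν = N, profileWeight w ν =
      ∑ j ∈ range (D + 1), w (k + 1) ^ j / j.factorial *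
        ∑ ν ∈ profileBox k D with profileSize ν + (k + 1) * j = N, profileWeight w ν := by
  rw [sum_filter, sum_profileBox_succ]
  refine sum_congr rfl fun j _ => ?_
  rw [sum_filter, mul_sum]
  refine sum_congr rfl fun ν _ => ?_
  rw [profileSize_snoc, profileWeight_snoc]
  split_ifs <;> ring

theorem sum_profileWeight_size_eq_one (hw1 : 0 ≤ w 1) (D N : ℕ) :
    ∑ ν ∈ profileBox 1 D with profileSize ν = N, profileWeight w ν ≤
      w 1 ^ N / N.factorial := by
  rw [sum_profileWeight_size_eq_succ]
  simp only [profileBox, profileSize, profileWeight, univ_eq_empty, sum_empty, prod_empty,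
    zero_add, one_mul, Fintype.piFinset_of_isEmpty, univ_unique, filter_const, sum_const,
    apply_ite, card_singleton, card_empty, ite_smul, one_smul, zero_nsmul, mul_one, mul_zero,
    sum_ite_eq', mem_range, Order.lt_add_one_iff]
  split_ifs
  · exact le_rfl
  · positivity

theorem sum_profileWeight_size_eq_le (hw1 : 0 < w 1) (hw : ∀ i : Fin k, 0 ≤ w (i + 1))
    (hk : 1 ≤ k) (D N : ℕ) :
    ∑ ν ∈ profileBox k D with profileSize ν = N, profileWeight w ν ≤
      Wseq w k ^ ((N : ℝ) / k) / (N / k).factorial := by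
  induction k generalizing N with
  | zero => omega
  | succ k ih =>
    rcases Nat.eq_zero_or_pos k with rfl | hk
    · simpa [Wseq] using sum_profileWeight_size_eq_one hw1.le D N
    have hwk : 0 ≤ w (k + 1) := by simpa using hw (Fin.last k)
    have hWk := Wseq_pos hw1 (fun i => hw i.castSucc) hk
    set V := Wseq w k ^ (((k : ℝ) + 1) / k)
    have hV : 0 < V := Real.rpow_pos_of_pos hWk _
    have hVW : V ≤ Wseq w (k + 1) := by rw [Wseq_succ w hk]; linarith
    have hW : 0 < Wseq w (k + 1) := hV.trans_le hVW
    set F := N / (k + 1)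
    set r := N % (k + 1)
    have hN : N = (k + 1) * F + r := (Nat.div_add_mod N (k + 1)).symm
    have hterm : ∀ j ∈ range (D + 1), w (k + 1) ^ j / j.factorial *
        ∑ ν ∈ profileBox k D with profileSize ν + (k + 1) * j = N, profileWeight w ν ≤
          if j ≤ F then w (k + 1) ^ j / j.factorial * (V ^ (F - j) / (F - j).factorial) *
            V ^ ((r : ℝ) / (k + 1)) else 0 := by
      intro j _
      by_cases hj : (k + 1) * j ≤ N
      · have hjF : j ≤ F := (Nat.le_div_iff_mul_le (Nat.succ_pos k)).2 (by linarith)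
        have hN' : N - (k + 1) * j = (k + 1) * (F - j) + r := by
          rw [Nat.mul_sub]; have := Nat.mul_le_mul_left (k + 1) hjF; omega
        have hfac : (F - j).factorial ≤ ((N - (k + 1) * j) / k).factorial :=
          Nat.factorial_le ((Nat.le_div_iff_mul_le hk).2 (by rw [hN']; nlinarith))
        have hinner := ih (fun i => hw i.castSucc) hk (N - (k + 1) * j)
        have hfilter : (profileBox k D).filter (fun ν => profileSize ν + (k + 1) * j = N) =
            (profileBox k D).filter (fun ν => profileSize ν = N - (k + 1) * j) :=
          filter_congr fun ν _ => by omega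
        rw [hfilter, if_pos hjF, mul_assoc]
        refine mul_le_mul_of_nonneg_left (hinner.trans ?_) (by positivity)
        rw [hN'] at hfac
        rw [hN', rpow_natCast_div_eq hWk hk, div_mul_eq_mul_div]
        gcongr
      · rw [sum_eq_zero fun ν hν => absurd (mem_filter.1 hν).2 (by omega), mul_zero]
        split_ifs <;> positivity
    calc _ = _ := sum_profileWeight_size_eq_succ w D N
      _ ≤ ∑ j ∈ range (D + 1), if j ≤ F then w (k + 1) ^ j / j.factorial *
            (V ^ (F - j) / (F - j).factorial) * V ^ ((r : ℝ) / (k + 1)) else 0 :=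
          sum_le_sum hterm
      _ ≤ ∑ j ∈ range (F + 1), w (k + 1) ^ j / j.factorial *
            (V ^ (F - j) / (F - j).factorial) * V ^ ((r : ℝ) / (k + 1)) := by
          rw [← sum_filter]
          exact sum_le_sum_of_subset_of_nonneg (fun j hj => by simp at hj ⊢; omega)
            fun _ _ _ => by positivity
      _ = Wseq w (k + 1) ^ F / F.factorial * V ^ ((r : ℝ) / (k + 1)) := by
          rw [← sum_mul, add_pow_div_factorial, ← Wseq_succ w hk]
      _ ≤ Wseq w (k + 1) ^ F / F.factorial * Wseq w (k + 1) ^ ((r : ℝ) / (k + 1)) := by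
          gcongr
      _ = Wseq w (k + 1) ^ ((N : ℝ) / (k + 1 : ℕ)) / (N / (k + 1)).factorial := by
          rw [div_mul_eq_mul_div, ← Real.rpow_natCast, ← Real.rpow_add hW]
          congr 2
          rw [hN]
          push_cast
          field_simp

end ProfileMass

section TailBounds

theorem profileSize_le_of_mem_profileBox {m d : ℕ} {ν : Fin m → ℕ} (hν : ν ∈ profileBox m d) :
    profileSize ν ≤ m * (m * d) := by
  simp only [profileBox, Fintype.mem_piFinset, mem_range] at hν
  calc profileSize ν ≤ ∑ _i : Fin m, m * d :=
        sum_le_sum fun i _ => Nat.mul_le_mul i.isLt (Nat.lt_succ_iff.1 (hν i))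
    _ = m * (m * d) := by simp

theorem poissonTail_eq_sum_size {m : ℕ} (a : ℕ → ℝ) (d u : ℕ) :
    poissonTail m a d u = ∑ N ∈ Icc u (m * (m * d)),
      ∑ ν ∈ profileBox m d with profileSize ν = N, profileWeight (fun i => d * a i) ν := by
  rw [poissonTail, ← sum_fiberwise_of_maps_to (g := profileSize) (t := Icc u (m * (m * d)))]
  · refine sum_congr rfl fun N hN => ?_
    rw [filter_filter]
    exact sum_congr (filter_congr fun ν _ => by simp at hN ⊢; omega) fun _ _ => rfl
  · intro ν hν
    simp only [mem_filter] at hν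
    exact mem_Icc.2 ⟨by exact_mod_cast hν.2, profileSize_le_of_mem_profileBox hν.1⟩

theorem rpow_div_div_factorial_le {W : ℝ} (hW : 0 < W) {m : ℕ} (hm : 0 < m) (N : ℕ) :
    W ^ ((N : ℝ) / m) / (N / m).factorial ≤
      max W 1 * Real.exp (W * Real.exp 1) * Real.exp (1 - N / m) := by
  set j := N / m
  have hm' : (0 : ℝ) < m := by exact_mod_cast hm
  have hj : (j : ℝ) ≤ N / m := by
    rw [le_div_iff₀ hm']; exact_mod_cast Nat.div_mul_le_self N m
  have hj1 : (N : ℝ) / m < j + 1 := by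
    rw [div_lt_iff₀ hm']; exact_mod_cast Nat.lt_mul_of_div_lt (Nat.lt_succ_self j) hm
  have hpow : W ^ ((N : ℝ) / m) ≤ max W 1 * W ^ j := by
    rcases le_or_gt 1 W with hW1 | hW1
    · calc W ^ ((N : ℝ) / m) ≤ W ^ ((j : ℝ) + 1) := Real.rpow_le_rpow_of_exponent_le hW1 hj1.le
        _ = W * W ^ j := by rw [Real.rpow_add_one hW.ne', Real.rpow_natCast, mul_comm]
        _ ≤ max W 1 * W ^ j := by gcongr; exact le_max_left _ _
    · calc W ^ ((N : ℝ) / m) ≤ W ^ (j : ℝ) := Real.rpow_le_rpow_of_exponent_ge hW hW1.le hj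
        _ ≤ max W 1 * W ^ j := by
          rw [Real.rpow_natCast]
          exact le_mul_of_one_le_left (by positivity) (le_max_right _ _)
  have hfact : W ^ j / j.factorial ≤ Real.exp (W * Real.exp 1) * Real.exp (-j) := by
    have := Real.pow_div_factorial_le_exp (W * Real.exp 1) (by positivity) j
    rw [mul_pow, ← Real.exp_nat_mul, mul_one] at this
    rw [← div_le_iff₀ (Real.exp_pos _), Real.exp_neg, div_inv_eq_mul]
    calc W ^ j / j.factorial * Real.exp j = W ^ j * Real.exp j / j.factorial := by ring
      _ ≤ _ := this
  calc W ^ ((N : ℝ) / m) / j.factorial ≤ max W 1 * (W ^ j / j.factorial) := by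
        rw [← mul_div_assoc]; gcongr
    _ ≤ max W 1 * (Real.exp (W * Real.exp 1) * Real.exp (-j)) := by gcongr
    _ ≤ max W 1 * (Real.exp (W * Real.exp 1) * Real.exp (1 - N / m)) := by
        gcongr; linarith
    _ = _ := by ring

theorem sum_Icc_exp_neg_div_le {m : ℕ} (hm : 0 < m) (a b : ℕ) :
    ∑ N ∈ Icc a b, Real.exp (-(N / m : ℝ)) ≤ Real.exp 1 * m * Real.exp (-(a / m : ℝ)) := by
  have hm' : (0 : ℝ) < m := by exact_mod_cast hm
  have hshift := sum_Ico_pow_mul_exp_neg_le (k := 0) (M := b + 1 - a) (one_div_pos.2 hm')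
  rw [← Ico_add_one_right_eq_Icc, sum_Ico_eq_sum_range]
  simp only [Nat.Ico_zero_eq_range, pow_zero, one_mul, Nat.factorial_zero, Nat.cast_one,
    zero_add, pow_one] at hshift
  calc ∑ i ∈ range (b + 1 - a), Real.exp (-(((a + i : ℕ) : ℝ) / m))
      = Real.exp (-(a / m : ℝ)) * ∑ i ∈ range (b + 1 - a), Real.exp (-(1 / m * i)) := by
        rw [mul_sum]
        refine sum_congr rfl fun i _ => ?_
        rw [← Real.exp_add]
        congr 1
        push_cast
        ring
    _ ≤ Real.exp (-(a / m : ℝ)) * (Real.exp 1 * m) := by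
        gcongr
        refine hshift.trans ?_
        rw [div_div_eq_mul_div, div_one]
        gcongr
        rw [mul_one]
        exact Real.exp_le_exp.2 (div_le_one_of_le₀ (Nat.one_le_cast.2 hm) hm'.le)
    _ = _ := by ring

theorem poissonTail_le_exp {m : ℕ} {a : ℕ → ℝ} (hm : 1 ≤ m) {d : ℕ} (hda : 0 < d * a 1)
    (ha : ∀ i : Fin m, 0 ≤ a (i + 1)) (u : ℕ) :
    poissonTail m a d u ≤ Real.exp 1 ^ 2 * m * max (Wseq (fun i => d * a i) m) 1 *
      Real.exp (Wseq (fun i => d * a i) m * Real.exp 1 - u / m) := by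
  set W := Wseq (fun i => d * a i) m
  have hW : 0 < W := Wseq_pos hda (fun i => mul_nonneg d.cast_nonneg (ha i)) hm
  rw [poissonTail_eq_sum_size]
  calc _ ≤ ∑ N ∈ Icc u (m * (m * d)), max W 1 * Real.exp (W * Real.exp 1) *
        Real.exp (1 - N / m) := sum_le_sum fun N _ =>
          (sum_profileWeight_size_eq_le hda (fun i => mul_nonneg d.cast_nonneg (ha i)) hm d
            N).trans (rpow_div_div_factorial_le hW hm N)
    _ = max W 1 * Real.exp (W * Real.exp 1) * Real.exp 1 *
        ∑ N ∈ Icc u (m * (m * d)), Real.exp (-(N / m : ℝ)) := by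
      rw [mul_sum]
      refine sum_congr rfl fun N _ => ?_
      rw [sub_eq_add_neg, Real.exp_add]
      ring
    _ ≤ max W 1 * Real.exp (W * Real.exp 1) * Real.exp 1 *
        (Real.exp 1 * m * Real.exp (-(u / m : ℝ))) := by
      gcongr
      exact sum_Icc_exp_neg_div_le hm _ _
    _ = _ := by
      rw [sub_eq_add_neg, Real.exp_add]
      ring

theorem bandExitProb_le_exp {m n kbar : ℕ} {q : ℤ → ℝ} {w : ℕ → ℝ}
    (hw : ∀ i : ℕ, w i = n * max (q i) (q (-i))) (hn : 1 ≤ n) (hm : 1 ≤ m)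
    (hq : ∀ k ∈ Icc (-(m : ℤ)) m, 0 ≤ q k) (hsum : ∑ k ∈ Icc (-(m : ℤ)) m, q k = 1)
    (hq1 : 0 < max (q 1) (q (-1))) :
    bandExitProb m q kbar kbar n 0 ≤ 2 * (Real.exp 1 ^ 2 * m * max (Wseq w m) 1 *
      Real.exp (Wseq w m * Real.exp 1 - (kbar + 1) / m)) := by
  obtain rfl : w = fun i : ℕ => n * max (q i) (q (-i)) := funext hw
  set a : ℕ → ℝ := fun i => max (q i) (q (-i))
  have hqa : ∀ i : Fin m, q ((i : ℕ) + 1) ≤ a (i + 1) ∧ q (-((i : ℕ) + 1)) ≤ a (i + 1) :=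
    fun i => by simp [a]
  have hE := bandExitProb_le_poissonTail_add hq hsum hqa (kbar := kbar) (lbar := kbar) n 0
  have hB := poissonTail_le_exp hm (mul_pos (by exact_mod_cast hn) (by simpa [a] using hq1))
    (fun i => (hq _ (by simp; omega)).trans (hqa i).1) (kbar + 1)
  push_cast at hE hB
  simp only [sub_zero, add_zero] at hE
  linarith

end TailBounds

section Constants

theorem one_le_Mseq {w : ℕ → ℝ} {i : ℕ} (hi : 1 ≤ i) (hW : 0 < Wseq w i) : 1 ≤ Mseq w i := by
  rcases le_or_gt 1 (Wseq w i) with h | h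
  · exact h.trans (le_max_left _ _)
  · refine le_trans ?_ (le_max_right _ _)
    refine Real.one_le_rpow_of_pos_of_le_one_of_nonpos hW h.le
      (div_nonpos_of_nonpos_of_nonneg ?_ ?_)
    · linarith [(Nat.one_le_cast (α := ℝ)).2 hi]
    · positivity

theorem le_Gconst {w : ℕ → ℝ} {m : ℕ} (hm : 1 ≤ m) (hw1 : 0 < w 1)
    (hw : ∀ i : Fin m, 0 ≤ w (i + 1)) : 2 * m * max (Wseq w m) 1 ≤ Gconst w m := by
  have hW : ∀ i, 1 ≤ i → i ≤ m → 0 < Wseq w i := fun i hi him =>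
    Wseq_pos hw1 (fun j => hw ⟨j, by omega⟩) hi
  have hprod : 1 ≤ ∏ i ∈ Icc 1 (m - 1), Mseq w i ^ 2 := one_le_prod fun i hi => by
    simp only [mem_Icc] at hi
    exact one_le_pow₀ (one_le_Mseq hi.1 (hW i hi.1 (by omega)))
  have hexp : 1 ≤ Real.exp (Wseq w m) := Real.one_le_exp (hW m hm le_rfl).le
  rw [Gconst]
  calc 2 * m * max (Wseq w m) 1 = 2 * m * max (Wseq w m) 1 * 1 * 1 := by ring
    _ ≤ _ := by gcongr

theorem sixteen_mul_le_mul_Gconst {w : ℕ → ℝ} {m : ℕ} (hm : 1 ≤ m) (hw1 : 0 < w 1)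
    (hw : ∀ i : Fin m, 0 ≤ w (i + 1)) {K : ℝ} (hK : 0 < K) :
    16 * (K * m * max (Wseq w m) 1) ≤ 4 * m * (m + 1) * K * Gconst w m := by
  have hG := mul_le_mul_of_nonneg_left (le_Gconst hm hw1 hw)
    (by positivity : (0 : ℝ) ≤ 4 * m * (m + 1) * K)
  have hm1 : (1 : ℝ) ≤ m := by exact_mod_cast hm
  have : (16 : ℝ) ≤ 8 * m * (m + 1) := by nlinarith
  have : 0 < K * m * max (Wseq w m) 1 := by positivity
  nlinarith

theorem le_div_of_mul_ceil_sub_one_le {m : ℕ} (hm : 0 < m) {x : ℝ} {kbar : ℕ}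
    (h : (m : ℝ) * ⌈x⌉ - 1 ≤ kbar) : x ≤ (kbar + 1) / m := by
  rw [le_div_iff₀ (by exact_mod_cast hm)]
  nlinarith [Int.le_ceil x]

/-- The constant `16` works because `2 e² < 16`. -/
theorem two_mul_exp_one_sq_mul_exp_sub_lt {X C ε x y : ℝ} (hX : 0 < X) (hC : 16 * X ≤ C)
    (hε : 0 < ε) (hxy : x - Real.log ε + Real.log C ≤ y) :
    2 * Real.exp 1 ^ 2 * X * Real.exp (x - y) < ε := by
  have hC0 : 0 < C := by linarith
  have he : Real.exp 1 ^ 2 < 8 := by nlinarith [Real.exp_one_lt_d9, Real.exp_pos 1]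
  have hexp : Real.exp (x - y) ≤ ε / C := by
    rw [← Real.exp_log hε, ← Real.exp_log hC0, ← Real.exp_sub]
    exact Real.exp_le_exp.2 (by linarith)
  calc 2 * Real.exp 1 ^ 2 * X * Real.exp (x - y) ≤ 2 * Real.exp 1 ^ 2 * X * (ε / C) := by
        gcongr
    _ < ε := by
      have hlt : 2 * Real.exp 1 ^ 2 * X < C := by nlinarith
      rw [mul_div_assoc', div_lt_iff₀ hC0]
      linarith [mul_lt_mul_of_pos_left hlt hε]

end Constants

end HScut

theorem american_truncation_error_general (n m : ℕ) (hn : 1 ≤ n) (hm : 1 ≤ m) (q : ℤ → ℝ)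
    (hq : ∀ l : ℤ, -(m : ℤ) ≤ l → l ≤ (m : ℤ) → 0 ≤ q l)
    (hsum : ∑ l ∈ Finset.Icc (-(m : ℤ)) (m : ℤ), q l = 1)
    (hq1 : 0 < max (q 1) (q (-1)))
    (wf : ℕ → ℝ) (hwf : ∀ i : ℕ, wf i = (n : ℝ) * max (q (i : ℤ)) (q (-(i : ℤ))))
    (S0 K σ τ h r p : ℝ) (hS0 : 0 < S0) (hK : 0 < K) (hτ : 0 < τ)
    (hr : 0 ≤ r) (hp0 : 0 ≤ p) (hp1 : p ≤ 1)
    (ε : ℝ) (hε : 0 < ε) (kbar : ℕ)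
    (hkbar : max ((m : ℝ) * (⌈2 * Wseq wf m - 1⌉ : ℤ) - 1)
        ((m : ℝ) * (⌈Wseq wf m * Real.exp 1 - Real.log ε +
            Real.log (4 * m * ((m : ℝ) + 1) * K * Gconst wf m)⌉ : ℤ) - 1) ≤ (kbar : ℝ)) :
    |VAtr n m q p (τ / n) S0 K σ h r K kbar kbar n 0 0 -
        VAfull n m q p (τ / n) S0 K σ h r n 0 0| < ε := by
  have hq' : ∀ k ∈ Icc (-(m : ℤ)) m, 0 ≤ q k := fun k hk => hq k (mem_Icc.1 hk).1 (mem_Icc.1 hk).2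
  have hrdt : 0 ≤ r * (τ / n) := by positivity
  have hw1 : 0 < wf 1 := by
    rw [hwf]; exact mul_pos (by exact_mod_cast hn) (by simpa using hq1)
  have hw : ∀ i : Fin m, 0 ≤ wf (i + 1) := fun i => by
    rw [hwf]; exact mul_nonneg n.cast_nonneg (le_max_of_le_left (hq' _ (by simp; omega)))
  rw [abs_of_nonneg (sub_nonneg.2 (VAfull_le_VAtr hq' hsum hS0 hK.le hp0 hp1 hrdt n 0 0))]
  calc _ ≤ K * bandExitProb m q kbar kbar n 0 := by
        linarith [VAtr_le_VAfull_add (n := n) (σ := σ) (h := h) hq' hsum hS0 hK.le hp0 hp1 hrdt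
          (kbar := kbar) (lbar := kbar) n 0 0]
    _ ≤ K * (2 * (Real.exp 1 ^ 2 * m * max (Wseq wf m) 1 *
        Real.exp (Wseq wf m * Real.exp 1 - (kbar + 1) / m))) := by
      gcongr
      exact bandExitProb_le_exp hwf hn hm hq' hsum hq1
    _ = 2 * Real.exp 1 ^ 2 * (K * m * max (Wseq wf m) 1) *
        Real.exp (Wseq wf m * Real.exp 1 - (kbar + 1) / m) := by
      ring
    _ < ε := two_mul_exp_one_sq_mul_exp_sub_lt (by positivity)
        (sixteen_mul_le_mul_Gconst hm hw1 hw hK) hε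
        (le_div_of_mul_ceil_sub_one_le hm ((le_max_right _ _).trans hkbar))

/-- Theorem: assume `r ≥ 0` and `max(q₁, q₋₁) > 0`; if `k̄ = l̄` satisfies
`k̄ ≥ max{ m⌈2W_m − 1⌉ − 1, m⌈W_m e − ln ε + ln(4m(m+1)KG)⌉ − 1 }`, then the truncated
backward American put price with boundary value `K` satisfies
`|V_A^K(0,0,0) − V_A(0,0,0)| < ε`. -/
theorem american_truncation_error (n m : ℕ) (hn : 1 ≤ n) (hm : 1 ≤ m) (q : ℤ → ℝ)
    (hq : ∀ l : ℤ, -(m : ℤ) ≤ l → l ≤ (m : ℤ) → 0 ≤ q l)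
    (hsum : ∑ l ∈ Finset.Icc (-(m : ℤ)) (m : ℤ), q l = 1)
    (hq1 : 0 < max (q 1) (q (-1)))
    (wf : ℕ → ℝ) (hwf : ∀ i : ℕ, wf i = (n : ℝ) * max (q (i : ℤ)) (q (-(i : ℤ))))
    (S0 K σ τ h r p : ℝ) (hS0 : 0 < S0) (hK : 0 < K) (hh : 0 < h) (hτ : 0 < τ)
    (hr : 0 ≤ r) (hp0 : 0 ≤ p) (hp1 : p ≤ 1)
    (ε : ℝ) (hε : 0 < ε) (kbar : ℕ)
    (hkbar : max ((m : ℝ) * (⌈2 * Wseq wf m - 1⌉ : ℤ) - 1)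
        ((m : ℝ) * (⌈Wseq wf m * Real.exp 1 - Real.log ε +
            Real.log (4 * m * ((m : ℝ) + 1) * K * Gconst wf m)⌉ : ℤ) - 1) ≤ (kbar : ℝ)) :
    |VAtr n m q p (τ / n) S0 K σ h r K kbar kbar n 0 0 -
        VAfull n m q p (τ / n) S0 K σ h r n 0 0| < ε :=
  american_truncation_error_general n m hn hm q hq hsum hq1 wf hwf S0 K σ τ h r p hS0 hK hτ hr hp0
    hp1 ε hε kbar hkbar
end
end
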